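/- Let T be a terrain with n vertices. Then the set U is finite and |U| ≤ 2n² + n. -/

import Mathlib

/-!
If a vertex `p` sees two points `q₁, q₂` of an edge, it sees the whole segment `[q₁, q₂]`: the lower
boundary of the triangle `p q₁ q₂` consists of sides of the triangle, and all three sides are
nowhere below the terrain. Hence `V(p) ∩ e_i` is convex, so it lies in a single connected component
of `V(p)`; as the terrain is a graph over the `x`-axis, each edge carries at most one rightmost and
one leftmost extremal point of `V(p)`. This gives at most `2(n - 1)` extremal points per vertex,
and `|U| ≤ n (2(n - 1) + 1) ≤ 2n² + n`.
-/

open Set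

/-- A terrain: `n ≥ 2` vertices `v 0, …, v (n-1)` in `ℝ²` with strictly
increasing `x`-coordinates. -/
structure Terrain where
  n : ℕ
  hn : 2 ≤ n
  v : ℕ → ℝ × ℝ
  mono : ∀ i j : ℕ, i < j → j < n → (v i).1 < (v j).1

namespace Terrain

/-- The edge `e_i = [v_i, v_{i+1}]` (meaningful for `i + 1 < n`). -/
def edge (T : Terrain) (i : ℕ) : Set (ℝ × ℝ) := segment ℝ (T.v i) (T.v (i + 1))

/-- The terrain as a subset of `ℝ²`: the union of its edges. -/
def carrier (T : Terrain) : Set (ℝ × ℝ) := ⋃ i ∈ Finset.range (T.n - 1), T.edge i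

/-- The interior of the edge `e_i`: the edge minus its two endpoints. -/
def intEdge (T : Terrain) (i : ℕ) : Set (ℝ × ℝ) := T.edge i \ {T.v i, T.v (i + 1)}

/-- `p` sees `q` iff every point of the segment `[p, q]` is nowhere strictly below
the terrain, i.e. every point of the segment lies on or above the terrain point
with the same `x`-coordinate. -/
def sees (T : Terrain) (p q : ℝ × ℝ) : Prop :=
  ∀ z ∈ segment ℝ p q, ∀ t ∈ T.carrier, t.1 = z.1 → t.2 ≤ z.2

/-- The visibility region `V(p) = {q ∈ T : p sees q}`. -/
def vis (T : Terrain) (p : ℝ × ℝ) : Set (ℝ × ℝ) := {q ∈ T.carrier | T.sees p q}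

/-- `V(C) = ⋃_{g ∈ C} V(g)`. -/
def visSet (T : Terrain) (C : Set (ℝ × ℝ)) : Set (ℝ × ℝ) := ⋃ g ∈ C, T.vis g

/-- `C ⊆ T` is a cover of the terrain iff `V(C) = T`. -/
def IsCover (T : Terrain) (C : Set (ℝ × ℝ)) : Prop :=
  C ⊆ T.carrier ∧ T.visSet C = T.carrier

/-- The vertex set `V = {v_1, …, v_n}`. -/
def vertexSet (T : Terrain) : Set (ℝ × ℝ) := {p | ∃ i < T.n, p = T.v i}

/-- Edge `e_i` is critical w.r.t. `g ∈ C`: `C \ {g}` covers some part of,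
but not all of, `int(e_i)`. -/
def IsCriticalWrt (T : Terrain) (C : Set (ℝ × ℝ)) (g : ℝ × ℝ) (i : ℕ) : Prop :=
  (T.visSet (C \ {g}) ∩ T.intEdge i).Nonempty ∧ ¬ T.intEdge i ⊆ T.visSet (C \ {g})

/-- `g` is a left-guard of `e_i`: `x(g) < x(v_i)` and `e_i` is critical w.r.t. `g`. -/
def IsLeftGuard (T : Terrain) (C : Set (ℝ × ℝ)) (g : ℝ × ℝ) (i : ℕ) : Prop :=
  g.1 < (T.v i).1 ∧ T.IsCriticalWrt C g i

/-- `g` is a right-guard of `e_i`: `x(v_{i+1}) < x(g)` and `e_i` is critical w.r.t. `g`. -/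
def IsRightGuard (T : Terrain) (C : Set (ℝ × ℝ)) (g : ℝ × ℝ) (i : ℕ) : Prop :=
  (T.v (i + 1)).1 < g.1 ∧ T.IsCriticalWrt C g i

/-- `q` is extremal in `V(p)`: `q ∈ V(p)` and `q` has maximal or minimal
`x`-coordinate within its connected component of `V(p)`. -/
def Extremal (T : Terrain) (p q : ℝ × ℝ) : Prop :=
  q ∈ T.vis p ∧
    ((∀ r ∈ connectedComponentIn (T.vis p) q, r.1 ≤ q.1) ∨
     (∀ r ∈ connectedComponentIn (T.vis p) q, q.1 ≤ r.1))

/-- The guard candidate set `U`: all vertices together with the extremal points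
of the vertices' visibility regions. -/
def Uset (T : Terrain) : Set (ℝ × ℝ) :=
  T.vertexSet ∪ ⋃ i ∈ Finset.range T.n, {q | T.Extremal (T.v i) q}

/-- `OPT(G, W)`: the minimum cardinality of a finite `C ⊆ G` with `W ⊆ V(C)`. -/
noncomputable def OPT (T : Terrain) (G W : Set (ℝ × ℝ)) : ℕ :=
  sInf {k | ∃ C : Finset (ℝ × ℝ), ↑C ⊆ G ∧ W ⊆ T.visSet ↑C ∧ C.card = k}

end Terrain

def IsVertUpperSet (A : Set (ℝ × ℝ)) : Prop :=
  ∀ ⦃w z : ℝ × ℝ⦄, w ∈ A → w.1 = z.1 → w.2 ≤ z.2 → z ∈ A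

/-- Twice the signed area of the triangle `r s z`: for `r.1 < s.1` it is nonnegative exactly
when `z` lies on or above the line through `r` and `s`. -/
def orient (r s z : ℝ × ℝ) : ℝ := (s.1 - r.1) * (z.2 - r.2) - (s.2 - r.2) * (z.1 - r.1)

lemma convex_setOf_orient_nonneg (r s : ℝ × ℝ) : Convex ℝ {z | 0 ≤ orient r s z} := by
  intro z₁ h₁ z₂ h₂ a b ha hb hab
  obtain rfl : b = 1 - a := by linarith
  have : orient r s (a • z₁ + (1 - a) • z₂) = a * orient r s z₁ + (1 - a) * orient r s z₂ := by
    simp only [orient, Prod.fst_add, Prod.snd_add, Prod.smul_fst, Prod.smul_snd, smul_eq_mul]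
    ring
  rw [Set.mem_ofPred_eq, this]
  exact add_nonneg (mul_nonneg ha h₁) (mul_nonneg hb h₂)

lemma IsVertUpperSet.mem_of_orient_nonneg {A : Set (ℝ × ℝ)} (hA : IsVertUpperSet A)
    {r s z : ℝ × ℝ} (hrs : r.1 < s.1) (hseg : segment ℝ r s ⊆ A) (hz : z.1 ∈ Set.Icc r.1 s.1)
    (ho : 0 ≤ orient r s z) : z ∈ A := by
  have hd : 0 < s.1 - r.1 := sub_pos.2 hrs
  set t := (z.1 - r.1) / (s.1 - r.1)
  have ht : t * (s.1 - r.1) = z.1 - r.1 := div_mul_cancel₀ _ hd.ne'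
  have hw : (1 - t) • r + t • s ∈ segment ℝ r s :=
    ⟨1 - t, t, sub_nonneg.2 ((div_le_one hd).2 (by linarith [hz.2])),
      div_nonneg (by linarith [hz.1]) hd.le, by ring, rfl⟩
  refine hA (hseg hw) ?_ ?_ <;>
    simp only [Prod.fst_add, Prod.snd_add, Prod.smul_fst, Prod.smul_snd, smul_eq_mul]
  · linear_combination ht
  · have key : (s.1 - r.1) * (z.2 - ((1 - t) * r.2 + t * s.2)) = orient r s z := by
      rw [orient]; linear_combination (r.2 - s.2) * ht
    linarith [(mul_nonneg_iff_of_pos_left hd).1 (key ▸ ho)]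

/-- For `x`-sorted vertices `u, m, v` the lower boundary of their triangle is the chord `[u, v]`
if `m` lies above it, and the chain `[u, m] ∪ [m, v]` otherwise. -/
lemma IsVertUpperSet.convexHull_subset_of_sorted {A : Set (ℝ × ℝ)} (hA : IsVertUpperSet A)
    {u m v : ℝ × ℝ} (huv : u.1 < v.1) (hum : u.1 ≤ m.1) (hmv : m.1 ≤ v.1)
    (h_um : segment ℝ u m ⊆ A) (h_uv : segment ℝ u v ⊆ A) (h_mv : segment ℝ m v ⊆ A) :
    convexHull ℝ {u, m, v} ⊆ A := by
  intro z hz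
  have hull : ∀ S : Set (ℝ × ℝ), Convex ℝ S → u ∈ S → m ∈ S → v ∈ S → z ∈ S :=
    fun S hS hu hm hv ↦ convexHull_min (Set.insert_subset hu (Set.pair_subset hm hv)) hS hz
  have hzx : z.1 ∈ Set.Icc u.1 v.1 :=
    hull (Prod.fst ⁻¹' Set.Icc u.1 v.1) ((convex_Icc _ _).linear_preimage (LinearMap.fst ℝ ℝ ℝ))
      ⟨le_rfl, huv.le⟩ ⟨hum, hmv⟩ ⟨huv.le, le_rfl⟩
  have hcyc₁ : orient u m v = -orient u v m := by simp only [orient]; ring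
  have hcyc₂ : orient m v u = -orient u v m := by simp only [orient]; ring
  have hself : ∀ r s : ℝ × ℝ, orient r s r = 0 ∧ orient r s s = 0 := fun r s ↦
    ⟨by simp only [orient]; ring, by simp only [orient]; ring⟩
  rcases le_or_gt 0 (orient u v m) with hm | hm
  · exact hA.mem_of_orient_nonneg huv h_uv hzx <| hull _ (convex_setOf_orient_nonneg u v)
      (hself u v).1.ge hm (hself u v).2.ge
  have h_um' : 0 ≤ orient u m z := hull _ (convex_setOf_orient_nonneg u m)
    (hself u m).1.ge (hself u m).2.ge (by simp only [Set.mem_ofPred_eq]; linarith)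
  have h_mv' : 0 ≤ orient m v z := hull _ (convex_setOf_orient_nonneg m v)
    (by simp only [Set.mem_ofPred_eq]; linarith) (hself m v).1.ge (hself m v).2.ge
  by_cases h : m.1 ≤ z.1 ∧ m.1 < v.1
  · exact hA.mem_of_orient_nonneg h.2 h_mv ⟨h.1, hzx.2⟩ h_mv'
  · have hzm : z.1 ≤ m.1 ∧ u.1 < m.1 := by
      by_cases h' : m.1 ≤ z.1
      · have : v.1 ≤ m.1 := not_lt.1 fun h'' ↦ h ⟨h', h''⟩
        exact ⟨by linarith [hzx.2], by linarith⟩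
      · exact ⟨by linarith, by linarith [hzx.1]⟩
    exact hA.mem_of_orient_nonneg hzm.2 h_um ⟨hzx.1, hzm.1⟩ h_um'

lemma IsVertUpperSet.convexHull_subset {A : Set (ℝ × ℝ)} (hA : IsVertUpperSet A)
    {p q₁ q₂ : ℝ × ℝ} (hq : q₁.1 < q₂.1) (h₁ : segment ℝ p q₁ ⊆ A) (h₂ : segment ℝ p q₂ ⊆ A)
    (h₁₂ : segment ℝ q₁ q₂ ⊆ A) : convexHull ℝ {p, q₁, q₂} ⊆ A := by
  rcases le_or_gt p.1 q₁.1 with hp₁ | hp₁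
  · exact hA.convexHull_subset_of_sorted (hp₁.trans_lt hq) hp₁ hq.le h₁ h₂ h₁₂
  rcases le_or_gt p.1 q₂.1 with hp₂ | hp₂
  · rw [Set.insert_comm]
    exact hA.convexHull_subset_of_sorted hq hp₁.le hp₂ (segment_symm ℝ q₁ p ▸ h₁) h₁₂ h₂
  · rw [Set.insert_comm, Set.pair_comm]
    exact hA.convexHull_subset_of_sorted (hq.trans hp₂) hq.le hp₂.le h₁₂ (segment_symm ℝ q₁ p ▸ h₁)
      (segment_symm ℝ q₂ p ▸ h₂)

lemma fst_mem_Icc_of_mem_segment {r s w : ℝ × ℝ} (h : r.1 ≤ s.1) (hw : w ∈ segment ℝ r s) :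
    w.1 ∈ Set.Icc r.1 s.1 := by
  rw [← segment_eq_Icc h]
  obtain ⟨a, b, ha, hb, hab, rfl⟩ := hw
  exact ⟨a, b, ha, hb, hab, rfl⟩

lemma injOn_fst_segment {r s : ℝ × ℝ} (h : r.1 ≠ s.1) : Set.InjOn Prod.fst (segment ℝ r s) := by
  rintro _ ⟨a, b, -, -, hab, rfl⟩ _ ⟨a', b', -, -, hab', rfl⟩ hx
  obtain rfl : a = 1 - b := by linarith
  obtain rfl : a' = 1 - b' := by linarith
  simp only [Prod.fst_add, Prod.smul_fst, smul_eq_mul] at hx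
  have : (b - b') * (s.1 - r.1) = 0 := by linear_combination hx
  obtain rfl : b = b' := by
    simpa [sub_eq_zero, sub_ne_zero.2 h.symm] using this
  rfl

lemma Finset.encard_biUnion_le_card_mul {ι α : Type*} (t : Finset ι) (s : ι → Set α) {k : ℕ∞}
    (h : ∀ i ∈ t, (s i).encard ≤ k) : (⋃ i ∈ t, s i).encard ≤ t.card * k := by
  refine (t.set_encard_biUnion_le s).trans <| (Finset.sum_le_sum h).trans ?_
  rw [Finset.sum_const, nsmul_eq_mul]

namespace Terrain

variable (T : Terrain)

lemma mem_carrier_iff {x : ℝ × ℝ} : x ∈ T.carrier ↔ ∃ i < T.n - 1, x ∈ T.edge i := by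
  simp [carrier]

lemma edge_subset_carrier {i : ℕ} (hi : i < T.n - 1) : T.edge i ⊆ T.carrier :=
  Set.subset_biUnion_of_mem (u := T.edge) (Finset.mem_coe.2 (Finset.mem_range.2 hi))

lemma fst_v_lt_fst_v_succ {i : ℕ} (hi : i < T.n - 1) : (T.v i).1 < (T.v (i + 1)).1 :=
  T.mono i (i + 1) i.lt_succ_self (by omega)

lemma injOn_fst_edge {i : ℕ} (hi : i < T.n - 1) : Set.InjOn Prod.fst (T.edge i) :=
  injOn_fst_segment (T.fst_v_lt_fst_v_succ hi).ne

lemma eq_of_mem_edge_of_lt {i j : ℕ} (hij : i < j) (hj : j < T.n - 1) {s t : ℝ × ℝ}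
    (hs : s ∈ T.edge i) (ht : t ∈ T.edge j) (hst : s.1 = t.1) : s = t := by
  have hs' := fst_mem_Icc_of_mem_segment (T.fst_v_lt_fst_v_succ (hij.trans hj)).le hs
  have ht' := fst_mem_Icc_of_mem_segment (T.fst_v_lt_fst_v_succ hj).le ht
  obtain rfl : i + 1 = j := by
    by_contra hne
    linarith [T.mono (i + 1) j (by omega) (by omega), hs'.2, ht'.1]
  have hs_eq : s = T.v (i + 1) :=
    T.injOn_fst_edge (hij.trans hj) hs (right_mem_segment ℝ _ _) (by linarith [hs'.2, ht'.1])
  have ht_eq : t = T.v (i + 1) :=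
    T.injOn_fst_edge hj ht (left_mem_segment ℝ _ _) (by linarith [hs'.2, ht'.1])
  rw [hs_eq, ht_eq]

lemma injOn_fst_carrier : Set.InjOn Prod.fst T.carrier := by
  intro s hs t ht hst
  obtain ⟨i, hi, hs⟩ := T.mem_carrier_iff.1 hs
  obtain ⟨j, hj, ht⟩ := T.mem_carrier_iff.1 ht
  rcases lt_trichotomy i j with hij | rfl | hij
  · exact T.eq_of_mem_edge_of_lt hij hj hs ht hst
  · exact T.injOn_fst_edge hi hs ht hst
  · exact (T.eq_of_mem_edge_of_lt hij hi ht hs hst.symm).symm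

def above : Set (ℝ × ℝ) := {z | ∀ t ∈ T.carrier, t.1 = z.1 → t.2 ≤ z.2}

lemma sees_iff_segment_subset_above {p q : ℝ × ℝ} : T.sees p q ↔ segment ℝ p q ⊆ T.above :=
  Iff.rfl

lemma isVertUpperSet_above : IsVertUpperSet T.above :=
  fun _ _ hw hwz hle t ht htz ↦ (hw t ht (htz.trans hwz.symm)).trans hle

lemma carrier_subset_above : T.carrier ⊆ T.above :=
  fun _ hs _ ht hts ↦ (T.injOn_fst_carrier ht hs hts).le.2

/-- The triangle `p q₁ q₂` lies above the terrain because its three sides do. -/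
lemma sees_of_mem_segment {p q₁ q₂ q : ℝ × ℝ} (h₁ : T.sees p q₁) (h₂ : T.sees p q₂)
    (h₁₂ : segment ℝ q₁ q₂ ⊆ T.carrier) (hq : q ∈ segment ℝ q₁ q₂) : T.sees p q := by
  wlog hlt : q₁.1 < q₂.1 generalizing q₁ q₂
  · rcases (not_lt.1 hlt).lt_or_eq with hgt | heq
    · exact this h₂ h₁ (segment_symm ℝ q₁ q₂ ▸ h₁₂) (segment_symm ℝ q₁ q₂ ▸ hq) hgt
    · obtain rfl : q₂ = q₁ := T.injOn_fst_carrier (h₁₂ (right_mem_segment ℝ _ _))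
        (h₁₂ (left_mem_segment ℝ _ _)) heq
      rw [segment_same] at hq
      rwa [Set.mem_singleton_iff.1 hq]
  rw [sees_iff_segment_subset_above] at h₁ h₂ ⊢
  have hq_hull : q ∈ convexHull ℝ {p, q₁, q₂} :=
    segment_subset_convexHull (by simp) (by simp) hq
  exact ((convex_convexHull ℝ _).segment_subset (subset_convexHull ℝ _ (by simp)) hq_hull).trans <|
    T.isVertUpperSet_above.convexHull_subset hlt h₁ h₂ (h₁₂.trans T.carrier_subset_above)

lemma convex_vis_inter_edge (p : ℝ × ℝ) {i : ℕ} (hi : i < T.n - 1) :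
    Convex ℝ (T.vis p ∩ T.edge i) := by
  rw [convex_iff_segment_subset]
  rintro q₁ ⟨hq₁, he₁⟩ q₂ ⟨hq₂, he₂⟩ q hq
  have hseg : segment ℝ q₁ q₂ ⊆ T.edge i := (convex_segment _ _).segment_subset he₁ he₂
  exact ⟨⟨T.edge_subset_carrier hi (hseg hq), T.sees_of_mem_segment hq₁.2 hq₂.2
    (hseg.trans (T.edge_subset_carrier hi)) hq⟩, hseg hq⟩

/-- `R` is `(· ≤ ·)` for rightmost and `(· ≥ ·)` for leftmost points. Since `V(p) ∩ e_i` is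
convex, it lies in the component of each of its points, so two such points bound each other. -/
lemma subsingleton_extremal_inter_edge (p : ℝ × ℝ) {i : ℕ} (hi : i < T.n - 1)
    (R : ℝ → ℝ → Prop) [Std.Antisymm R] :
    {q ∈ T.vis p ∩ T.edge i | ∀ r ∈ connectedComponentIn (T.vis p) q, R r.1 q.1}.Subsingleton := by
  rintro q ⟨hq, hqR⟩ q' ⟨hq', hq'R⟩
  have hsub : ∀ {x}, x ∈ T.vis p ∩ T.edge i →
      T.vis p ∩ T.edge i ⊆ connectedComponentIn (T.vis p) x := fun hx ↦
    (T.convex_vis_inter_edge p hi).isPreconnected.subset_connectedComponentIn hx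
      Set.inter_subset_left
  exact T.injOn_fst_carrier (T.edge_subset_carrier hi hq.2) (T.edge_subset_carrier hi hq'.2) <|
    (antisymm (r := R) (hqR q' (hsub hq hq')) (hq'R q (hsub hq' hq))).symm

lemma encard_extremal_le (p : ℝ × ℝ) : {q | T.Extremal p q}.encard ≤ (T.n - 1 : ℕ) * 2 := by
  set S : ℕ → (ℝ → ℝ → Prop) → Set (ℝ × ℝ) := fun i R ↦
    {q ∈ T.vis p ∩ T.edge i | ∀ r ∈ connectedComponentIn (T.vis p) q, R r.1 q.1}
  have hcover : {q | T.Extremal p q} ⊆ ⋃ i ∈ Finset.range (T.n - 1),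
      (S i (· ≤ ·) ∪ S i (· ≥ ·)) := by
    rintro q ⟨hq, hmax | hmin⟩ <;> obtain ⟨i, hi, hqi⟩ := T.mem_carrier_iff.1 hq.1 <;>
      simp only [Set.mem_iUnion, Finset.mem_range] <;> refine ⟨i, hi, ?_⟩
    exacts [Or.inl ⟨⟨hq, hqi⟩, hmax⟩, Or.inr ⟨⟨hq, hqi⟩, hmin⟩]
  refine (Set.encard_le_encard hcover).trans <|
    (Finset.encard_biUnion_le_card_mul _ _ (k := 2) fun i hi ↦ ?_).trans_eq
      (by rw [Finset.card_range])
  have hi : i < T.n - 1 := Finset.mem_range.1 hi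
  calc (S i (· ≤ ·) ∪ S i (· ≥ ·)).encard
      ≤ (S i (· ≤ ·)).encard + (S i (· ≥ ·)).encard := Set.encard_union_le _ _
    _ ≤ 1 + 1 := add_le_add
        (encard_le_one_iff_subsingleton.2 (T.subsingleton_extremal_inter_edge p hi _))
        (encard_le_one_iff_subsingleton.2 (T.subsingleton_extremal_inter_edge p hi _))
    _ = 2 := one_add_one_eq_two

lemma Uset_subset : T.Uset ⊆ ⋃ i ∈ Finset.range T.n, insert (T.v i) {q | T.Extremal (T.v i) q} := by
  rintro q (⟨i, hi, rfl⟩ | hq)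
  · exact Set.mem_biUnion (Finset.mem_coe.2 (Finset.mem_range.2 hi)) (Set.mem_insert _ _)
  · simp only [Set.mem_iUnion] at hq ⊢
    obtain ⟨i, hi, hq⟩ := hq
    exact ⟨i, hi, Set.mem_insert_of_mem _ hq⟩

lemma encard_Uset_le : T.Uset.encard ≤ T.n * ((T.n - 1 : ℕ) * 2 + 1) :=
  (Set.encard_le_encard T.Uset_subset).trans <|
    (Finset.encard_biUnion_le_card_mul _ _ fun _ _ ↦ (Set.encard_insert_le _ _).trans
      (add_le_add_left (T.encard_extremal_le _) _)).trans_eq (by rw [Finset.card_range])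

end Terrain

/-- The guard candidate set `U` is finite with `|U| ≤ 2n² + n`. -/
theorem Uset_finite_card (T : Terrain) :
    T.Uset.Finite ∧ T.Uset.ncard ≤ 2 * T.n ^ 2 + T.n := by
  rw [← Set.encard_le_coe_iff_finite_ncard_le]
  refine T.encard_Uset_le.trans ?_
  have : T.n * ((T.n - 1) * 2 + 1) ≤ 2 * T.n ^ 2 + T.n := by
    have := Nat.sub_le T.n 1
    nlinarith
  exact_mod_cast this
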